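/- arXiv:1809.01532 — 2 statements merged into one kernel-verified Lean document; each statement's English description precedes it below -/
import Mathlib

section
/- There are infinitely many triples (a, b, c) of positive integers with a² + b² = c², such that a, b and c are all practical numbers and gcd(a, b, c) = 4. In particular, for every nonnegative integer k, the triple a = 2(3^(3^k·70) − 1), b = 4·3^(3^k·35), c = 2(3^(3^k·70) + 1) satisfies a² + b² = c², gcd(a, b, c) = 4, and a, b, c are all practical. -/
/-- A positive integer `m` is practical if every `n` with `1 ≤ n ≤ m` is a sum of
distinct positive divisors of `m`. -/
def Practical (m : ℕ) : Prop :=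
  0 < m ∧ ∀ n : ℕ, 1 ≤ n → n ≤ m → ∃ s : Finset ℕ, s ⊆ m.divisors ∧ ∑ d ∈ s, d = n

/-!
A practical number `m` stays practical when multiplied by any `n ≤ σ(m) + 1`, in particular by
any `n ≤ 2m`. All the numbers in question are reached by such multiplications: `4 · 3 ^ j` one
factor `3` at a time, `2 (3 ^ 70 ∓ 1)` along their prime factorisations, and the passage from
`k` to `k + 1` through `y ^ 6 - 1 = (y ^ 2 - 1)(y ^ 2 - y + 1)(y ^ 2 + y + 1)` for
`y = 3 ^ (3 ^ k * 35)` and `x ^ 210 + 1 = (x ^ 70 + 1) Φ₁₂(x) Φ₆₀(x) Φ₈₄(x) Φ₄₂₀(x)` for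
`x = 3 ^ 3 ^ k`, each new factor being at most twice the product of the previous ones.
The triple is `2 (y ^ 2 - 1, 2 y, y ^ 2 + 1)` with `y` odd, whose gcd is `4`.
-/

open ArithmeticFunction.sigma

theorem Finset.exists_subset_sum_eq_of_le_one_add_sum_lt (D : Finset ℕ)
    (hD : ∀ d ∈ D, d ≤ 1 + ∑ e ∈ D with e < d, e) {n : ℕ} (hn : n ≤ ∑ e ∈ D, e) :
    ∃ s ⊆ D, ∑ e ∈ s, e = n := by
  induction D using Finset.induction_on_max generalizing n with
  | empty => exact ⟨∅, subset_rfl, by simp_all⟩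
  | insert a D hlt ih =>
    have ha : a ∉ D := fun h => (hlt a h).false
    have hD' : ∀ d ∈ D, d ≤ 1 + ∑ e ∈ D with e < d, e := by
      intro d hd
      have := hD d (mem_insert_of_mem hd)
      rwa [filter_insert, if_neg (hlt d hd).not_gt] at this
    have haD : a ≤ 1 + ∑ e ∈ D, e := by
      have := hD a (mem_insert_self a D)
      rwa [filter_insert, if_neg (lt_irrefl a), filter_true_of_mem hlt] at this
    rw [sum_insert ha] at hn
    by_cases hnD : n ≤ ∑ e ∈ D, e
    · obtain ⟨s, hs, rfl⟩ := ih hD' hnD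
      exact ⟨s, hs.trans (subset_insert a D), rfl⟩
    · obtain ⟨s, hs, hsum⟩ := ih hD' (n := n - a) (by omega)
      refine ⟨insert a s, insert_subset_insert a hs, ?_⟩
      rw [sum_insert (fun h => ha (hs h)), hsum]
      omega

namespace Practical

variable {m : ℕ}

theorem exists_subset_sum_eq (hm : Practical m) {n : ℕ} (hn : n ≤ σ 1 m) :
    ∃ s ⊆ m.divisors, ∑ d ∈ s, d = n := by
  rw [ArithmeticFunction.sigma_one_apply] at hn
  refine Finset.exists_subset_sum_eq_of_le_one_add_sum_lt _ (fun d hd => ?_) hn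
  have hdm : d ≤ m := Nat.divisor_le hd
  obtain rfl | hd1 : d = 1 ∨ 2 ≤ d := by have := Nat.pos_of_mem_divisors hd; omega
  · omega
  obtain ⟨s, hs, hsum⟩ := hm.2 (d - 1) (by omega) (by omega)
  have hsd : s ⊆ m.divisors.filter (· < d) := fun e he => Finset.mem_filter.2
    ⟨hs he, by have := Finset.single_le_sum (fun i _ => Nat.zero_le i) he; omega⟩
  have := Finset.sum_le_sum_of_subset (f := id) hsd
  simp only [id] at this
  omega

theorem two_mul_le_sigma_add_one (hm : Practical m) : 2 * m ≤ σ 1 m + 1 := by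
  obtain h1 | h2 : m = 1 ∨ 2 ≤ m := by have := hm.1; omega
  · simp [h1]
  obtain ⟨s, hs, hsum⟩ := hm.2 (m - 1) (by omega) (by omega)
  have hms : m ∉ s := fun h => by
    have := Finset.single_le_sum (fun i _ => Nat.zero_le i) h; omega
  have := Finset.sum_le_sum_of_subset (f := id)
    (Finset.insert_subset (Nat.mem_divisors_self m hm.1.ne') hs)
  simp only [id, Finset.sum_insert hms] at this
  rw [ArithmeticFunction.sigma_one_apply]
  omega

/-- The Stewart–Sierpiński criterion. -/
theorem mul_of_le_sigma_add_one (hm : Practical m) {n : ℕ} (hn : 0 < n) (hnm : n ≤ σ 1 m + 1) :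
    Practical (m * n) := by
  refine ⟨Nat.mul_pos hm.1 hn, fun N _ hN => ?_⟩
  obtain ⟨s, hs, hssum⟩ := hm.exists_subset_sum_eq (n := N % n)
    (by have := Nat.mod_lt N hn; omega)
  obtain ⟨t, ht, htsum⟩ := hm.exists_subset_sum_eq (n := N / n)
    ((Nat.div_le_of_le_mul (by rwa [mul_comm])).trans (ArithmeticFunction.sigma_one_apply m ▸
      Finset.single_le_sum (fun i _ => Nat.zero_le i) (Nat.mem_divisors_self m hm.1.ne')))
  have hdisj : Disjoint s (t.image (· * n)) := by
    refine Finset.disjoint_left.2 fun e hes het => ?_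
    obtain ⟨b, hb, rfl⟩ := Finset.mem_image.1 het
    have := Finset.single_le_sum (fun i _ => Nat.zero_le i) hes
    have := Nat.le_mul_of_pos_left n (Nat.pos_of_mem_divisors (ht hb))
    have := Nat.mod_lt N hn
    omega
  refine ⟨s ∪ t.image (· * n), Finset.union_subset ?_ ?_, ?_⟩
  · exact hs.trans (Nat.divisors_subset_of_dvd (Nat.mul_pos hm.1 hn).ne' (dvd_mul_right m n))
  · exact Finset.image_subset_iff.2 fun b hb => Nat.mem_divisors.2
      ⟨mul_dvd_mul (Nat.dvd_of_mem_divisors (ht hb)) dvd_rfl, (Nat.mul_pos hm.1 hn).ne'⟩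
  · rw [Finset.sum_union hdisj, Finset.sum_image fun a _ b _ h => Nat.eq_of_mul_eq_mul_right hn h,
      ← Finset.sum_mul, hssum, htsum, Nat.mod_add_div']

theorem mul_of_le_two_mul (hm : Practical m) {n : ℕ} (hn : 0 < n) (hnm : n ≤ 2 * m) :
    Practical (m * n) :=
  hm.mul_of_le_sigma_add_one hn (hnm.trans hm.two_mul_le_sigma_add_one)

theorem mul_pow (hm : Practical m) {n : ℕ} (hn : 0 < n) (hnm : n ≤ 2 * m) (k : ℕ) :
    Practical (m * n ^ k) := by
  induction k with
  | zero => simpa using hm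
  | succ k ih =>
    rw [pow_succ, ← mul_assoc]
    exact ih.mul_of_le_two_mul hn (hnm.trans (by
      have := Nat.le_mul_of_pos_right m (pow_pos hn k); omega))

end Practical

theorem practical_one : Practical 1 :=
  ⟨one_pos, fun n h1 h2 => ⟨{1}, by simp, by simp; omega⟩⟩

theorem practical_two_pow (k : ℕ) : Practical (2 ^ k) := by
  simpa using practical_one.mul_pow two_pos le_rfl k

theorem practical_four_mul_three_pow (k : ℕ) : Practical (4 * 3 ^ k) :=
  (practical_two_pow 2).mul_pow three_pos (by norm_num) k

theorem practical_two_mul_three_pow_seventy_sub_one : Practical (2 * (3 ^ 70 - 1)) := by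
  rw [show 2 * (3 ^ 70 - 1) =
    16 * 11 * 11 * 61 * 71 * 547 * 1093 * 2664097031 * 374857981681 by norm_num]
  repeat refine Practical.mul_of_le_two_mul ?_ (by norm_num) (by norm_num)
  exact practical_two_pow 4

theorem practical_two_mul_three_pow_seventy_add_one : Practical (2 * (3 ^ 70 + 1)) := by
  rw [show 2 * (3 ^ 70 + 1) =
    4 * 5 * 5 * 29 * 1181 * 16493 * 28596961 * 32839661 * 94373861 by norm_num]
  repeat refine Practical.mul_of_le_two_mul ?_ (by norm_num) (by norm_num)
  exact practical_two_pow 2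

theorem Practical.two_mul_pow_six_sub_one {y : ℕ} (hy : 2 ≤ y) (h : Practical (2 * (y ^ 2 - 1))) :
    Practical (2 * (y ^ 6 - 1)) := by
  have hy2 : y ≤ y ^ 2 := Nat.le_self_pow two_ne_zero y
  have hy6 : 1 ≤ y ^ 6 := Nat.one_le_pow _ _ (by omega)
  have hfac : 2 * (y ^ 6 - 1) = 2 * (y ^ 2 - 1) * (y ^ 2 - y + 1) * (y ^ 2 + y + 1) := by
    zify [hy2, hy6, hy2.trans' (by omega : 1 ≤ y)]
    ring
  rw [hfac]
  refine (h.mul_of_le_two_mul (by omega) ?_).mul_of_le_two_mul (by omega) ?_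
  · zify [hy2, hy2.trans' (by omega : 1 ≤ y)]
    nlinarith
  · zify [hy2, hy2.trans' (by omega : 1 ≤ y)]
    nlinarith

/- The values at `x` of the cyclotomic polynomials `Φ₁₂, Φ₆₀, Φ₈₄, Φ₄₂₀`, whose product is
`Φ₆(x ^ 70) = x ^ 140 - x ^ 70 + 1`. -/
def cyc12 (x : ℤ) : ℤ := x ^ 4 - x ^ 2 + 1

def cyc60 (x : ℤ) : ℤ := x ^ 16 + x ^ 14 - x ^ 10 - x ^ 8 - x ^ 6 + x ^ 2 + 1

def cyc84 (x : ℤ) : ℤ := x ^ 24 + x ^ 22 - x ^ 18 - x ^ 16 + x ^ 12 - x ^ 8 - x ^ 6 + x ^ 2 + 1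

def cyc420 (x : ℤ) : ℤ :=
  x ^ 96 + x ^ 92 - x ^ 94 + x ^ 86 - x ^ 84 + 2 * x ^ 82 - x ^ 80 + x ^ 78 + x ^ 72 - x ^ 70
    + x ^ 68 - x ^ 66 + x ^ 64 - x ^ 62 - x ^ 56 - x ^ 52 - x ^ 48 - x ^ 44 - x ^ 40 - x ^ 34
    + x ^ 32 - x ^ 30 + x ^ 28 - x ^ 26 + x ^ 24 + x ^ 18 - x ^ 16 + 2 * x ^ 14 - x ^ 12 + x ^ 10
    + x ^ 4 - x ^ 2 + 1

theorem cyc12_mul_cyc60_mul_cyc84_mul_cyc420 (x : ℤ) :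
    cyc12 x * cyc60 x * cyc84 x * cyc420 x = x ^ 140 - x ^ 70 + 1 := by
  unfold cyc12 cyc60 cyc84 cyc420
  ring

section

variable {x : ℤ}

/- In each bound below, substituting `x = t + 3` leaves a polynomial in `t` with nonnegative
coefficients. -/
theorem cyc12_mem_Icc (hx : 3 ≤ x) : cyc12 x ∈ Set.Icc (x ^ 2) (x ^ 6) := by
  obtain ⟨t, ht, rfl⟩ : ∃ t ≥ 0, x = t + 3 := ⟨x - 3, by linarith, by ring⟩
  unfold cyc12
  constructor <;> (rw [← sub_nonneg]; ring_nf; positivity)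

theorem cyc60_mem_Icc (hx : 3 ≤ x) : cyc60 x ∈ Set.Icc (x ^ 14) (x ^ 18) := by
  obtain ⟨t, ht, rfl⟩ : ∃ t ≥ 0, x = t + 3 := ⟨x - 3, by linarith, by ring⟩
  unfold cyc60
  constructor <;> (rw [← sub_nonneg]; ring_nf; positivity)

theorem cyc84_mem_Icc (hx : 3 ≤ x) : cyc84 x ∈ Set.Icc (x ^ 22) (x ^ 26) := by
  obtain ⟨t, ht, rfl⟩ : ∃ t ≥ 0, x = t + 3 := ⟨x - 3, by linarith, by ring⟩
  unfold cyc84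
  constructor <;> (rw [← sub_nonneg]; ring_nf; positivity)

theorem cyc420_pos_and_le (hx : 3 ≤ x) :
    0 < cyc420 x ∧ cyc420 x ≤ 4 * (x ^ 70 + 1) * (cyc12 x * cyc60 x * cyc84 x) := by
  obtain ⟨h12, -⟩ := cyc12_mem_Icc hx
  obtain ⟨h60, -⟩ := cyc60_mem_Icc hx
  obtain ⟨h84, -⟩ := cyc84_mem_Icc hx
  have hP : x ^ 35 ≤ cyc12 x * cyc60 x * cyc84 x :=
    calc x ^ 35 ≤ x ^ 2 * x ^ 14 * x ^ 22 := by
          rw [← pow_add, ← pow_add]; exact pow_le_pow_right₀ (by linarith) (by norm_num)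
      _ ≤ cyc12 x * cyc60 x * cyc84 x := by
          have : 0 ≤ cyc12 x := h12.trans' (by positivity)
          have : 0 ≤ cyc60 x := h60.trans' (by positivity)
          gcongr
  have hP0 : 0 < cyc12 x * cyc60 x * cyc84 x := lt_of_lt_of_le (by positivity) hP
  have hx70 : 1 ≤ x ^ 70 := one_le_pow₀ (by linarith)
  have hprod := cyc12_mul_cyc60_mul_cyc84_mul_cyc420 x
  refine ⟨pos_of_mul_pos_right (hprod ▸ by nlinarith) hP0.le, le_of_mul_le_mul_left ?_ hP0⟩
  calc cyc12 x * cyc60 x * cyc84 x * cyc420 x = x ^ 140 - x ^ 70 + 1 := hprod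
    _ ≤ x ^ 35 * x ^ 35 * x ^ 70 := by ring_nf; linarith
    _ ≤ (cyc12 x * cyc60 x * cyc84 x) * (cyc12 x * cyc60 x * cyc84 x) * (4 * (x ^ 70 + 1)) := by
        gcongr; linarith
    _ = _ := by ring

end

theorem Practical.two_mul_pow_210_add_one {x : ℕ} (hx : 3 ≤ x) (h : Practical (2 * (x ^ 70 + 1))) :
    Practical (2 * (x ^ 210 + 1)) := by
  have hX : (3 : ℤ) ≤ x := by exact_mod_cast hx
  have hle70 {k : ℕ} (hk : k ≤ 70) : (x : ℤ) ^ k ≤ x ^ 70 := pow_le_pow_right₀ (by linarith) hk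
  have hprod := cyc12_mul_cyc60_mul_cyc84_mul_cyc420 x
  obtain ⟨h12, h12'⟩ := cyc12_mem_Icc hX
  obtain ⟨h60, h60'⟩ := cyc60_mem_Icc hX
  obtain ⟨h84, h84'⟩ := cyc84_mem_Icc hX
  obtain ⟨h420, h420'⟩ := cyc420_pos_and_le hX
  have h12pos : 1 ≤ cyc12 x := h12.trans' (one_le_pow₀ (by linarith))
  have h60pos : 1 ≤ cyc60 x := h60.trans' (one_le_pow₀ (by linarith))
  have h84pos : 1 ≤ cyc84 x := h84.trans' (one_le_pow₀ (by linarith))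
  lift cyc12 x to ℕ using (by linarith) with a
  lift cyc60 x to ℕ using (by linarith) with b
  lift cyc84 x to ℕ using (by linarith) with c
  lift cyc420 x to ℕ using h420.le with d
  have hfac : 2 * (x ^ 210 + 1) = 2 * (x ^ 70 + 1) * a * b * c * d := by
    zify
    linear_combination (-2 * ((x : ℤ) ^ 70 + 1)) * hprod
  rw [hfac]
  have h1 := h.mul_of_le_two_mul (n := a) (by exact_mod_cast h12pos)
    (by zify; linarith [hle70 (k := 6) (by norm_num)])
  have h2 := h1.mul_of_le_two_mul (n := b) (by exact_mod_cast h60pos)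
    (by zify; nlinarith [hle70 (k := 18) (by norm_num)])
  have h3 := h2.mul_of_le_two_mul (n := c) (by exact_mod_cast h84pos)
    (by zify; nlinarith [hle70 (k := 26) (by norm_num),
      one_le_mul_of_one_le_of_one_le h12pos h60pos])
  exact h3.mul_of_le_two_mul (by exact_mod_cast h420) (by zify; linarith)

theorem practical_two_mul_three_pow_sub_one (k : ℕ) : Practical (2 * (3 ^ (3 ^ k * 70) - 1)) := by
  induction k with
  | zero => simpa using practical_two_mul_three_pow_seventy_sub_one
  | succ k ih =>
    have hy : 2 ≤ 3 ^ (3 ^ k * 35) := Nat.le_self_pow (by positivity) 3 |>.trans' (by norm_num)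
    convert Practical.two_mul_pow_six_sub_one hy (by rwa [← pow_mul, mul_assoc]) using 3
    rw [← pow_mul]
    ring_nf

theorem practical_two_mul_three_pow_add_one (k : ℕ) : Practical (2 * (3 ^ (3 ^ k * 70) + 1)) := by
  induction k with
  | zero => simpa using practical_two_mul_three_pow_seventy_add_one
  | succ k ih =>
    have hx : 3 ≤ 3 ^ 3 ^ k := Nat.le_self_pow (by positivity) 3
    convert Practical.two_mul_pow_210_add_one hx (by rwa [← pow_mul]) using 3
    rw [← pow_mul]
    ring_nf

theorem two_mul_sq_sub_one_sq_add_four_mul_sq {y : ℕ} (hy : 1 ≤ y) :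
    (2 * (y ^ 2 - 1)) ^ 2 + (4 * y) ^ 2 = (2 * (y ^ 2 + 1)) ^ 2 := by
  zify [Nat.one_le_pow 2 y hy]
  ring

theorem gcd_two_mul_sq_sub_one_gcd_four_mul_two_mul_sq_add_one {y : ℕ} (hy : Odd y) :
    Nat.gcd (2 * (y ^ 2 - 1)) (Nat.gcd (4 * y) (2 * (y ^ 2 + 1))) = 4 := by
  obtain ⟨t, rfl⟩ := hy
  have hcop : Nat.Coprime (2 * t + 1) (2 * t * (t + 1) + 1) :=
    Nat.isCoprime_iff_coprime.1 ⟨-(2 * t + 1), 2, by push_cast; ring⟩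
  have hA : 2 * ((2 * t + 1) ^ 2 - 1) = 4 * (2 * t * (t + 1)) := by
    rw [show (2 * t + 1) ^ 2 = 2 * (2 * t * (t + 1)) + 1 by ring, Nat.add_sub_cancel]; ring
  have hC : 2 * ((2 * t + 1) ^ 2 + 1) = 4 * (2 * t * (t + 1) + 1) := by ring
  rw [hA, hC, Nat.gcd_mul_left, hcop, Nat.gcd_mul_left, Nat.gcd_one_right]

def PracticalPythagoreanGcdFour (a b c : ℕ) : Prop :=
  a ^ 2 + b ^ 2 = c ^ 2 ∧ Nat.gcd a (Nat.gcd b c) = 4 ∧ Practical a ∧ Practical b ∧ Practical c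

theorem practicalPythagoreanGcdFour_three_pow (k : ℕ) :
    PracticalPythagoreanGcdFour (2 * (3 ^ (3 ^ k * 70) - 1)) (4 * 3 ^ (3 ^ k * 35))
      (2 * (3 ^ (3 ^ k * 70) + 1)) := by
  have hsq : 3 ^ (3 ^ k * 70) = (3 ^ (3 ^ k * 35)) ^ 2 := by
    rw [← pow_mul]
    ring_nf
  refine ⟨?_, ?_, practical_two_mul_three_pow_sub_one k, practical_four_mul_three_pow _,
    practical_two_mul_three_pow_add_one k⟩
  · rw [hsq]
    exact two_mul_sq_sub_one_sq_add_four_mul_sq (Nat.one_le_pow _ 3 three_pos)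
  · rw [hsq]
    exact gcd_two_mul_sq_sub_one_gcd_four_mul_two_mul_sq_add_one (Odd.pow (by decide))

theorem practical_pythagorean_gcd_four :
    {t : ℕ × ℕ × ℕ | 0 < t.1 ∧ 0 < t.2.1 ∧ 0 < t.2.2 ∧
      t.1 ^ 2 + t.2.1 ^ 2 = t.2.2 ^ 2 ∧
      Practical t.1 ∧ Practical t.2.1 ∧ Practical t.2.2 ∧
      Nat.gcd t.1 (Nat.gcd t.2.1 t.2.2) = 4}.Infinite ∧
    ∀ k : ℕ,
      (2 * (3 ^ (3 ^ k * 70) - 1)) ^ 2 + (4 * 3 ^ (3 ^ k * 35)) ^ 2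
        = (2 * (3 ^ (3 ^ k * 70) + 1)) ^ 2 ∧
      Nat.gcd (2 * (3 ^ (3 ^ k * 70) - 1))
        (Nat.gcd (4 * 3 ^ (3 ^ k * 35)) (2 * (3 ^ (3 ^ k * 70) + 1))) = 4 ∧
      Practical (2 * (3 ^ (3 ^ k * 70) - 1)) ∧
      Practical (4 * 3 ^ (3 ^ k * 35)) ∧
      Practical (2 * (3 ^ (3 ^ k * 70) + 1)) := by
  refine ⟨Set.infinite_of_injective_forall_mem (f := fun k : ℕ =>
    (2 * (3 ^ (3 ^ k * 70) - 1), 4 * 3 ^ (3 ^ k * 35), 2 * (3 ^ (3 ^ k * 70) + 1))) ?_ fun k => ?_,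
    practicalPythagoreanGcdFour_three_pow⟩
  · intro k l hkl
    simpa using congrArg (fun t => t.2.1) hkl
  · obtain ⟨hpyth, hgcd, hA, hB, hC⟩ := practicalPythagoreanGcdFour_three_pow k
    exact ⟨hA.1, hB.1, hC.1, hpyth, hA, hB, hC, hgcd⟩
end

section
/- Let m be a practical number. Then mn is a practical number for every integer n with 1 ≤ n ≤ 2m. -/
lemma practical_rep (m : ℕ) (hm : Practical m) (r : ℕ) (hr : r ≤ m) :
    ∃ s : Finset ℕ, s ⊆ m.divisors ∧ ∑ d ∈ s, d = r := by
  rcases Nat.eq_zero_or_pos r with h | h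
  · exact ⟨∅, by simp, by simp [h]⟩
  · exact hm.2 r h hr

/-- Greedy lemma: every `r` up to the sum of divisors of `m` that are `≤ k`
is a sum of distinct divisors of `m`, all `≤ k`. -/
lemma practical_key (m : ℕ) (hm : Practical m) :
    ∀ k : ℕ, ∀ r, r ≤ ∑ d ∈ m.divisors.filter (· ≤ k), d →
      ∃ B ⊆ m.divisors.filter (· ≤ k), ∑ d ∈ B, d = r := by
  intro k
  induction k with
  | zero =>
    intro r hr
    have he : m.divisors.filter (· ≤ 0) = ∅ := by
      ext d
      simp only [Finset.mem_filter, Nat.mem_divisors, Finset.notMem_empty, iff_false]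
      rintro ⟨⟨hd, hm0⟩, hd0⟩
      have := Nat.pos_of_dvd_of_pos hd (Nat.pos_of_ne_zero hm0)
      omega
    rw [he] at hr ⊢
    simp at hr
    exact ⟨∅, by simp, by simp [hr]⟩
  | succ k ih =>
    intro r hr
    by_cases hd : (k + 1) ∈ m.divisors
    · have hsplit : m.divisors.filter (· ≤ k + 1)
          = insert (k + 1) (m.divisors.filter (· ≤ k)) := by
        ext d
        simp only [Finset.mem_filter, Finset.mem_insert]
        constructor
        · rintro ⟨h1, h2⟩
          rcases Nat.lt_or_ge d (k + 1) with h | h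
          · exact Or.inr ⟨h1, by omega⟩
          · exact Or.inl (by omega)
        · rintro (h | ⟨h1, h2⟩)
          · exact ⟨h ▸ hd, by omega⟩
          · exact ⟨h1, by omega⟩
      have hnotmem : (k + 1) ∉ m.divisors.filter (· ≤ k) := by
        simp
      rcases le_or_gt r (∑ d ∈ m.divisors.filter (· ≤ k), d) with h | h
      · obtain ⟨B, hB, hBsum⟩ := ih r h
        exact ⟨B, hB.trans (by rw [hsplit]; exact Finset.subset_insert _ _), hBsum⟩
      · -- r > sum of small divisors; show k + 1 ≤ r
        have hkm : k + 1 ≤ m := Nat.le_of_dvd hm.1 (Nat.mem_divisors.mp hd).1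
        have hkle : k ≤ ∑ d ∈ m.divisors.filter (· ≤ k), d := by
          rcases Nat.eq_zero_or_pos k with hk0 | hk0
          · simp [hk0]
          · obtain ⟨B0, hB0, hB0sum⟩ := hm.2 k hk0 (by omega)
            have hB0' : B0 ⊆ m.divisors.filter (· ≤ k) := by
              intro d hdB
              refine Finset.mem_filter.mpr ⟨hB0 hdB, ?_⟩
              calc d ≤ ∑ e ∈ B0, e :=
                    Finset.single_le_sum (fun i _ => Nat.zero_le i) hdB
                _ = k := hB0sum
            calc k = ∑ d ∈ B0, d := hB0sum.symm
              _ ≤ _ := Finset.sum_le_sum_of_subset hB0'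
        have hrk : k + 1 ≤ r := by omega
        have hr' : r - (k + 1) ≤ ∑ d ∈ m.divisors.filter (· ≤ k), d := by
          rw [hsplit] at hr
          rw [Finset.sum_insert hnotmem] at hr
          omega
        obtain ⟨B, hB, hBsum⟩ := ih (r - (k + 1)) hr'
        refine ⟨insert (k + 1) B, ?_, ?_⟩
        · rw [hsplit]
          exact Finset.insert_subset_insert _ hB
        · rw [Finset.sum_insert (fun hmem => hnotmem (hB hmem)), hBsum]
          omega
    · have hsplit : m.divisors.filter (· ≤ k + 1) = m.divisors.filter (· ≤ k) := by
        ext d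
        simp only [Finset.mem_filter]
        constructor
        · rintro ⟨h1, h2⟩
          refine ⟨h1, ?_⟩
          rcases Nat.lt_or_ge d (k + 1) with h | h
          · omega
          · exact absurd ((by omega : d = k + 1) ▸ h1) hd
        · rintro ⟨h1, h2⟩; exact ⟨h1, by omega⟩
      rw [hsplit] at hr ⊢
      exact ih r hr

/-- Every `r ≤ σ(m)` is a sum of distinct divisors of a practical `m`. -/
lemma practical_rep_sigma (m : ℕ) (hm : Practical m) (r : ℕ)
    (hr : r ≤ ∑ d ∈ m.divisors, d) :
    ∃ B ⊆ m.divisors, ∑ d ∈ B, d = r := by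
  have hfull : m.divisors.filter (· ≤ m) = m.divisors := by
    apply Finset.filter_true_of_mem
    intro d hd
    exact Nat.le_of_dvd hm.1 (Nat.mem_divisors.mp hd).1
  obtain ⟨B, hB, hBsum⟩ := practical_key m hm m r (by rwa [hfull])
  exact ⟨B, by rwa [hfull] at hB, hBsum⟩

lemma practical_sigma_ge (m : ℕ) (hm : Practical m) :
    2 * m - 1 ≤ ∑ d ∈ m.divisors, d := by
  rcases Nat.lt_or_ge m 2 with h | h
  · interval_cases m
    · exact absurd hm.1 (by simp)
    · simp
  · obtain ⟨B, hB, hBsum⟩ := hm.2 (m - 1) (by omega) (by omega)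
    have hmB : m ∉ B := by
      intro hmem
      have : m ≤ ∑ d ∈ B, d := Finset.single_le_sum (fun i _ => Nat.zero_le i) hmem
      omega
    have hsub : insert m B ⊆ m.divisors := by
      refine Finset.insert_subset ?_ hB
      exact Nat.mem_divisors.mpr ⟨dvd_refl m, by omega⟩
    calc 2 * m - 1 = ∑ d ∈ insert m B, d := by
          rw [Finset.sum_insert hmB, hBsum]; omega
      _ ≤ _ := Finset.sum_le_sum_of_subset hsub

theorem practical_mul_le_two_mul (m : ℕ) (hm : Practical m)
    (n : ℕ) (h1 : 1 ≤ n) (h2 : n ≤ 2 * m) :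
    Practical (m * n) := by
  have hm0 := hm.1
  refine ⟨Nat.mul_pos hm0 h1, ?_⟩
  intro k hk1 hk2
  set q := k / n with hq_def
  set r := k % n with hr_def
  have hrn : r < n := Nat.mod_lt _ h1
  have hqm : q ≤ m := by
    have := Nat.div_le_div_right (c := n) hk2
    rwa [Nat.mul_div_cancel _ h1] at this
  have hkqr : q * n + r = k := by
    rw [hq_def, hr_def, Nat.mul_comm]
    exact Nat.div_add_mod k n
  -- representation of r
  have hrsigma : r ≤ ∑ d ∈ m.divisors, d := by
    have := practical_sigma_ge m hm
    omega
  obtain ⟨B, hB, hBsum⟩ := practical_rep_sigma m hm r hrsigma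
  -- representation of q
  obtain ⟨A, hA, hAsum⟩ := practical_rep m hm q hqm
  -- combine
  refine ⟨B ∪ A.image (fun d => d * n), ?_, ?_⟩
  · intro e he
    rcases Finset.mem_union.mp he with h | h
    · obtain ⟨hdvd, -⟩ := Nat.mem_divisors.mp (hB h)
      exact Nat.mem_divisors.mpr ⟨hdvd.mul_right n, by positivity⟩
    · obtain ⟨d, hdA, rfl⟩ := Finset.mem_image.mp h
      obtain ⟨hdvd, -⟩ := Nat.mem_divisors.mp (hA hdA)
      exact Nat.mem_divisors.mpr ⟨mul_dvd_mul hdvd dvd_rfl, by positivity⟩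
  · have hdisj : Disjoint B (A.image (fun d => d * n)) := by
      rw [Finset.disjoint_left]
      intro e heB heI
      obtain ⟨d, hdA, rfl⟩ := Finset.mem_image.mp heI
      have h1' : d * n ≤ ∑ x ∈ B, x :=
        Finset.single_le_sum (fun i _ => Nat.zero_le i) heB
      have hd1 : 1 ≤ d := Nat.pos_of_mem_divisors (hA hdA)
      have : n ≤ d * n := Nat.le_mul_of_pos_left n hd1
      omega
    rw [Finset.sum_union hdisj, hBsum]
    have himg : ∑ e ∈ A.image (fun d => d * n), e = q * n := by
      rw [Finset.sum_image, ← Finset.sum_mul, hAsum]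
      intro x _ y _ hxy
      exact Nat.eq_of_mul_eq_mul_right h1 hxy
    rw [himg]
    omega
end
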